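/- arXiv:1604.07066 — 4 statements merged into one kernel-verified Lean document; each statement's English description precedes it below -/
import Mathlib

section
/- Let S be a simple module over the real group algebra ℝG of a finite group G, equipped with a G-invariant inner product. Then every G-equivariant endomorphism d of S satisfies: the adjoint dᵗ of d (with respect to the inner product) again lies in the endomorphism ring End_{ℝG}(S), and d ∘ dᵗ is a nonnegative real scalar multiple of the identity. -/
open scoped InnerProductSpace

/-- (Lemma `l:adjointconj` preliminaries.) Let `S` be a simple
`ℝG`-module with a `G`-invariant inner product. Then for any `G`-equivariant
endomorphism `d` of `S`: the adjoint `dᵗ` is again `G`-equivariant, and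
`d ∘ dᵗ` is a nonnegative real scalar multiple of the identity. -/
theorem stmt2 {G : Type} [Group G] [Finite G]
    {S : Type} [NormedAddCommGroup S] [InnerProductSpace ℝ S] [FiniteDimensional ℝ S]
    (ρ : Representation ℝ G S)
    (horth : ∀ g (u v : S), ⟪ρ g u, ρ g v⟫_ℝ = ⟪u, v⟫_ℝ)
    (hsimple : Nontrivial S ∧
      ∀ W : Submodule ℝ S, (∀ g, ∀ x ∈ W, ρ g x ∈ W) → W = ⊥ ∨ W = ⊤)
    (d : S →ₗ[ℝ] S) (hd : ∀ g, d ∘ₗ ρ g = ρ g ∘ₗ d) :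
    (∀ g, (LinearMap.adjoint d) ∘ₗ ρ g = ρ g ∘ₗ (LinearMap.adjoint d)) ∧
    ∃ c : ℝ, 0 ≤ c ∧ d ∘ₗ (LinearMap.adjoint d) = c • LinearMap.id := by
  obtain ⟨hnt, hsimp⟩ := hsimple
  have hinv : ∀ g (v : S), ρ g (ρ g⁻¹ v) = v := by
    intro g v
    have : (ρ g * ρ g⁻¹) v = v := by rw [← map_mul, mul_inv_cancel, map_one]; rfl
    simpa using this
  have hadjinner : ∀ g (u v : S), ⟪ρ g u, v⟫_ℝ = ⟪u, ρ g⁻¹ v⟫_ℝ := by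
    intro g u v
    conv_lhs => rw [← hinv g v]
    exact horth g u (ρ g⁻¹ v)
  have hcomm : ∀ g, (LinearMap.adjoint d) ∘ₗ ρ g = ρ g ∘ₗ (LinearMap.adjoint d) := by
    intro g
    apply LinearMap.ext; intro u
    apply ext_inner_right ℝ
    intro v
    have h1 : ⟪(LinearMap.adjoint d) (ρ g u), v⟫_ℝ = ⟪ρ g u, d v⟫_ℝ :=
      LinearMap.adjoint_inner_left d _ _
    have h2 : ⟪ρ g ((LinearMap.adjoint d) u), v⟫_ℝ = ⟪(LinearMap.adjoint d) u, ρ g⁻¹ v⟫_ℝ :=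
      hadjinner g _ _
    simp only [LinearMap.comp_apply, h1, h2, LinearMap.adjoint_inner_left]
    rw [hadjinner g u (d v)]
    congr 1
    have := congrArg (fun f => f v) (hd g⁻¹)
    simpa using this.symm
  refine ⟨hcomm, ?_⟩
  set T := d ∘ₗ LinearMap.adjoint d with hT
  have hTsym : T.IsSymmetric := by
    intro x y
    show ⟪d ((LinearMap.adjoint d) x), y⟫_ℝ = ⟪x, d ((LinearMap.adjoint d) y)⟫_ℝ
    rw [← LinearMap.adjoint_inner_right d, LinearMap.adjoint_inner_left]
  obtain ⟨μ, hμ⟩ : ∃ μ : ℝ, Module.End.HasEigenvalue T μ :=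
    ⟨_, hTsym.hasEigenvalue_iSup_of_finiteDimensional⟩
  -- The eigenspace is G-invariant
  have hTcomm : ∀ g, T ∘ₗ ρ g = ρ g ∘ₗ T := by
    intro g
    rw [hT, LinearMap.comp_assoc, hcomm g, ← LinearMap.comp_assoc, hd g,
      LinearMap.comp_assoc]
  have hWinv : ∀ g, ∀ x ∈ Module.End.eigenspace T μ, ρ g x ∈ Module.End.eigenspace T μ := by
    intro g x hx
    rw [Module.End.mem_eigenspace_iff] at hx ⊢
    have := congrArg (fun f => f x) (hTcomm g)
    simp only [LinearMap.comp_apply] at this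
    rw [this, hx, map_smul]
  have hW := hsimp _ hWinv
  have hWne : Module.End.eigenspace T μ ≠ ⊥ := hμ
  have hWtop : Module.End.eigenspace T μ = ⊤ := (hW.resolve_left hWne)
  refine ⟨μ, ?_, ?_⟩
  · -- μ ≥ 0
    obtain ⟨v, hv⟩ := exists_ne (0 : S)
    have hvmem : v ∈ Module.End.eigenspace T μ := hWtop ▸ Submodule.mem_top
    rw [Module.End.mem_eigenspace_iff] at hvmem
    have h1 : ⟪T v, v⟫_ℝ = ‖LinearMap.adjoint d v‖ ^ 2 := by
      show ⟪d ((LinearMap.adjoint d) v), v⟫_ℝ = _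
      rw [← LinearMap.adjoint_inner_right d, real_inner_self_eq_norm_sq]
    have h2 : ⟪T v, v⟫_ℝ = μ * ‖v‖ ^ 2 := by
      rw [hvmem, real_inner_smul_left, real_inner_self_eq_norm_sq]
    have hvn : 0 < ‖v‖ ^ 2 := pow_pos (norm_pos_iff.mpr hv) 2
    nlinarith [sq_nonneg ‖LinearMap.adjoint d v‖]
  · apply LinearMap.ext; intro x
    have hxmem : x ∈ Module.End.eigenspace T μ := hWtop ▸ Submodule.mem_top
    rw [Module.End.mem_eigenspace_iff] at hxmem
    simpa using hxmem
end

section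
/- Let G be a finite group, H ≤ G, and let S be a simple real G-module with G-invariant inner product, character σ, and endomorphism ring 𝔻 = End_{ℝG}(S). Let w₁,…,w_m be a 𝔻-basis of the fixed space W = Fix_S(H) such that ⟨w_i, w_i⟩ = 1 and ⟨w_i·d₁, w_j·d₂⟩ = 0 whenever i ≠ j and d₁, d₂ ∈ 𝔻. Then for all g ∈ G: σ(e_H·g) = ⟨σ,σ⟩ · Σ_{i=1}^m ⟨w_i·g, w_i⟩, where e_H = (1/|H|)·Σ_{h∈H} h and ⟨σ,σ⟩ is the inner product of σ with itself as a class function. -/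
/-!
The average `e_H = |H|⁻¹ ∑_{h ∈ H} h` acts on `S` as the orthogonal projection onto the Wythoff
space `W`, so `σ(e_H g)` is the trace of `g` compressed to `W`: the sum of `⟨e, e g⟩` over an
orthonormal basis `e` of `W`. Such a basis is obtained by concatenating orthonormal bases of the
mutually orthogonal subspaces `w_i 𝔻`, each of dimension `dim 𝔻 = ⟨σ, σ⟩` by Schur's lemma.
For `d ∈ 𝔻` the operator `d* d` is a self-adjoint element of `𝔻`, hence a scalar, so `d` scales
inner products; thus every unit vector `x = w_i d` has `⟨x, x g⟩ = ⟨w_i, w_i g⟩`.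
-/

open scoped InnerProductSpace
open Module InnerProductSpace Submodule

lemma Orthonormal.trace_comp_starProjection_span {𝕜 E ι : Type*} [RCLike 𝕜]
    [NormedAddCommGroup E] [InnerProductSpace 𝕜 E] [FiniteDimensional 𝕜 E] [Fintype ι]
    {v : ι → E} (hv : Orthonormal 𝕜 v) (T : E →ₗ[𝕜] E) :
    LinearMap.trace 𝕜 E ((span 𝕜 (Set.range v)).starProjection.toLinearMap ∘ₗ T) =
      ∑ i, ⟪v i, T (v i)⟫_𝕜 := by
  let b := (Basis.span hv.linearIndependent).toOrthonormalBasis (by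
    rw [show ⇑(Basis.span hv.linearIndependent) = _ from funext (Basis.span_apply _)]
    exact orthonormal_span hv)
  have hcomp (x : E) : T ∘ₗ (rankOne 𝕜 x x : E →ₗ[𝕜] E) = rankOne 𝕜 (T x) x := by
    ext z; simp
  rw [LinearMap.trace_comp_comm', b.starProjection_eq_sum_rankOne,
    ContinuousLinearMap.toLinearMap_sum, ← Module.End.mul_eq_comp, Finset.mul_sum, map_sum]
  simp [b, Module.End.mul_eq_comp, hcomp, trace_rankOne]

namespace Representation

section Field

variable {k G V W : Type*} [Field k] [AddCommGroup V] [Module k V] [AddCommGroup W] [Module k W]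

section Monoid

variable [Monoid G] {ρ : Representation k G V} (σ : Representation k G W)

variable (ρ) in
def IntertwiningMap.applyₗ (v : V) : IntertwiningMap ρ σ →ₗ[k] W where
  toFun f := f v
  map_add' _ _ := rfl
  map_smul' _ _ := rfl

lemma IntertwiningMap.applyₗ_injective [ρ.IsIrreducible] {v : V} (hv : v ≠ 0) :
    Function.Injective (applyₗ ρ σ v) := by
  refine (injective_iff_map_eq_zero _).mpr fun f hf => ?_
  exact (IsIrreducible.injective_or_eq_zero f).resolve_left fun hinj =>
    hv (hinj (hf.trans (map_zero f).symm))

variable (ρ) in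
/-- The subspace `v𝔻` of the paper, `𝔻 = End_{kG}(V)` acting on the right. -/
def endSpan (v : V) : Submodule k V := LinearMap.range (IntertwiningMap.applyₗ ρ ρ v)

lemma mem_endSpan {v x : V} : x ∈ ρ.endSpan v ↔ ∃ f : IntertwiningMap ρ ρ, f v = x :=
  LinearMap.mem_range

lemma finrank_endSpan [ρ.IsIrreducible] [FiniteDimensional k V] {v : V} (hv : v ≠ 0) :
    finrank k (ρ.endSpan v) = finrank k (IntertwiningMap ρ ρ) :=
  LinearMap.finrank_range_of_inj (IntertwiningMap.applyₗ_injective ρ hv)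

end Monoid

section Group

variable [Group G] (ρ : Representation k G V)

lemma averageMap_eq_smul_sum [Fintype G] [Invertible (Fintype.card G : k)] :
    ρ.averageMap = ⅟(Fintype.card G : k) • ∑ g, ρ g := by
  simp [GroupAlgebra.average, map_sum]

lemma trace_averageMap_comp [Fintype G] [Invertible (Fintype.card G : k)] [FiniteDimensional k V]
    (T : V →ₗ[k] V) :
    LinearMap.trace k V (ρ.averageMap ∘ₗ T) =
      ⅟(Fintype.card G : k) * ∑ g, LinearMap.trace k V (ρ g ∘ₗ T) := by
  rw [averageMap_eq_smul_sum, LinearMap.smul_comp, ← Module.End.mul_eq_comp, Finset.sum_mul,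
    map_smul, map_sum, smul_eq_mul]
  rfl

variable {ρ} in
lemma iSup_endSpan_eq_invariants {H : Subgroup G} {ι : Type*} [Fintype ι] {w : ι → V}
    (hfix : ∀ i, w i ∈ invariants (ρ.comp H.subtype))
    (hspan : ∀ v ∈ invariants (ρ.comp H.subtype),
      ∃ f : ι → IntertwiningMap ρ ρ, v = ∑ i, f i (w i)) :
    ⨆ i, ρ.endSpan (w i) = invariants (ρ.comp H.subtype) := by
  refine le_antisymm (iSup_le fun i x hx => ?_) fun v hv => ?_
  · obtain ⟨f, rfl⟩ := mem_endSpan.mp hx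
    rw [mem_invariants]
    exact fun h =>
      (IntertwiningMap.isIntertwining ρ ρ f (h : G) (w i)).symm.trans (congrArg f (hfix i h))
  · obtain ⟨f, rfl⟩ := hspan v hv
    exact sum_mem fun i _ => mem_iSup_of_mem i (mem_endSpan.mpr ⟨f i, rfl⟩)

end Group

end Field

variable {G S : Type*} [Group G] [NormedAddCommGroup S] [InnerProductSpace ℝ S]

def IsOrthogonal (ρ : Representation ℝ G S) : Prop :=
  ∀ g (u v : S), ⟪ρ g u, ρ g v⟫_ℝ = ⟪u, v⟫_ℝ

variable {ρ : Representation ℝ G S}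

lemma isIrreducible_of_forall_submodule [Nontrivial S]
    (h : ∀ W : Submodule ℝ S, (∀ g, ∀ x ∈ W, ρ g x ∈ W) → W = ⊥ ∨ W = ⊤) :
    ρ.IsIrreducible where
  exists_pair_ne := ⟨⊥, ⊤, fun h => bot_ne_top (congrArg Subrepresentation.toSubmodule h)⟩
  eq_bot_or_eq_top W := (h W.toSubmodule fun g _ hx => W.apply_mem_toSubmodule g hx).imp
    (fun hW => Subrepresentation.toSubmodule_injective hW)
    (fun hW => Subrepresentation.toSubmodule_injective hW)

lemma IsIrreducible.nontrivial [ρ.IsIrreducible] : Nontrivial S := by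
  by_contra h
  rw [not_nontrivial_iff_subsingleton] at h
  exact bot_ne_top (α := Subrepresentation ρ)
    (Subrepresentation.toSubmodule_injective (Subsingleton.elim _ _))

lemma IsIrreducible.eq_smul_id_of_isSymmetric [ρ.IsIrreducible] [FiniteDimensional ℝ S]
    {T : S →ₗ[ℝ] S} (hT : T.IsSymmetric) (hcomm : ∀ g, T ∘ₗ ρ g = ρ g ∘ₗ T) :
    ∃ μ : ℝ, T = μ • LinearMap.id := by
  have := IsIrreducible.nontrivial (ρ := ρ)
  obtain ⟨μ, hμ⟩ : ∃ μ, Module.End.HasEigenvalue T μ :=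
    ⟨_, hT.hasEigenvalue_iSup_of_finiteDimensional⟩
  obtain ⟨v, hv⟩ := hμ.exists_hasEigenvector
  let f : IntertwiningMap ρ ρ :=
    ⟨T - μ • LinearMap.id, fun g => by
      rw [LinearMap.sub_comp, LinearMap.comp_sub, hcomm g, LinearMap.smul_comp,
        LinearMap.comp_smul, LinearMap.id_comp, LinearMap.comp_id]⟩
  have hfv : f v = f 0 := by
    rw [map_zero]
    exact sub_eq_zero.mpr hv.apply_eq_smul
  have hf : f = 0 := (IsIrreducible.injective_or_eq_zero f).resolve_left fun hf => hv.2 (hf hfv)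
  exact ⟨μ, sub_eq_zero.mp (congrArg IntertwiningMap.toLinearMap hf)⟩

namespace IsOrthogonal

variable (hρ : ρ.IsOrthogonal)
include hρ

lemma inner_map_left (g : G) (u v : S) : ⟪ρ g u, v⟫_ℝ = ⟪u, ρ g⁻¹ v⟫_ℝ := by
  rw [← hρ g u, self_inv_apply]

lemma adjoint_eq [FiniteDimensional ℝ S] (g : G) : LinearMap.adjoint (ρ g) = ρ g⁻¹ :=
  ((LinearMap.eq_adjoint_iff _ _).mpr fun x y => by
    rw [hρ.inner_map_left, inv_inv]).symm

lemma adjoint_comp_map [FiniteDimensional ℝ S] (f : IntertwiningMap ρ ρ) (g : G) :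
    LinearMap.adjoint f.toLinearMap ∘ₗ ρ g = ρ g ∘ₗ LinearMap.adjoint f.toLinearMap := by
  rw [← inv_inv g, ← hρ.adjoint_eq, ← LinearMap.adjoint_comp, ← LinearMap.adjoint_comp,
    f.isIntertwining']

lemma exists_inner_map_map_eq_mul [ρ.IsIrreducible] [FiniteDimensional ℝ S]
    (f : IntertwiningMap ρ ρ) : ∃ μ : ℝ, ∀ u v, ⟪f u, f v⟫_ℝ = μ * ⟪u, v⟫_ℝ := by
  have hcomm (g : G) : (LinearMap.adjoint f.toLinearMap ∘ₗ f.toLinearMap) ∘ₗ ρ g =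
      ρ g ∘ₗ (LinearMap.adjoint f.toLinearMap ∘ₗ f.toLinearMap) := by
    rw [LinearMap.comp_assoc, f.isIntertwining', ← LinearMap.comp_assoc, hρ.adjoint_comp_map,
      LinearMap.comp_assoc]
  obtain ⟨μ, hμ⟩ := IsIrreducible.eq_smul_id_of_isSymmetric
    (LinearMap.isSymmetric_adjoint_comp_self _) hcomm
  refine ⟨μ, fun u v => ?_⟩
  rw [← IntertwiningMap.toLinearMap_apply, ← IntertwiningMap.toLinearMap_apply,
    ← LinearMap.adjoint_inner_right, ← LinearMap.comp_apply, hμ]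
  simp [real_inner_smul_right]

lemma inner_map_apply_self [ρ.IsIrreducible] [FiniteDimensional ℝ S]
    (f : IntertwiningMap ρ ρ) {v : S} (hv : v ≠ 0) (hfv : ⟪f v, f v⟫_ℝ = ⟪v, v⟫_ℝ) (g : G) :
    ⟪f v, ρ g (f v)⟫_ℝ = ⟪v, ρ g v⟫_ℝ := by
  obtain ⟨μ, hμ⟩ := hρ.exists_inner_map_map_eq_mul f
  have hμ1 : μ = 1 := by
    have := hμ v v
    rw [hfv] at this
    exact (mul_eq_right₀ (inner_self_ne_zero.mpr hv)).mp this.symm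
  rw [← f.isIntertwining, hμ, hμ1, one_mul]

lemma character_inv [FiniteDimensional ℝ S] (g : G) : ρ.character g⁻¹ = ρ.character g := by
  let b := stdOrthonormalBasis ℝ S
  simp only [character, LinearMap.trace_eq_sum_inner _ b, ← hρ.inner_map_left]
  exact Finset.sum_congr rfl fun i _ => real_inner_comm _ _

lemma card_inv_mul_sum_char_mul_self_eq_finrank [Fintype G] [FiniteDimensional ℝ S] :
    (Nat.card G : ℝ)⁻¹ * ∑ g, ρ.character g * ρ.character g =
      finrank ℝ (IntertwiningMap ρ ρ) := by
  have : Invertible (Nat.card G : ℝ) := invertibleOfNonzero (by simp)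
  rw [← Representation.card_inv_mul_sum_char_mul_char_eq_finrank]
  simp only [hρ.character_inv]

lemma averageMap_eq_starProjection [Fintype G] [Invertible (Fintype.card G : ℝ)]
    [FiniteDimensional ℝ S] : ρ.averageMap = ρ.invariants.starProjection.toLinearMap := by
  ext x
  refine (eq_starProjection_of_mem_of_inner_eq_zero (ρ.averageMap_invariant x)
    fun w hw => ?_).symm
  have hinner : ⟪ρ.averageMap x, w⟫_ℝ = ⟪x, w⟫_ℝ := by
    rw [averageMap_eq_smul_sum]
    simp only [LinearMap.smul_apply, LinearMap.sum_apply, real_inner_smul_left, sum_inner]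
    conv_lhs => enter [2, 2, g]; rw [← hw g, hρ]
    simp
  rw [inner_sub_left, hinner, sub_self]

end IsOrthogonal

variable [FiniteDimensional ℝ S] {ι : Type*}

variable (ρ) in
noncomputable def endSpanFamily (w : ι → S) (p : Σ i, Fin (finrank ℝ (ρ.endSpan (w i)))) : S :=
  stdOrthonormalBasis ℝ (ρ.endSpan (w p.1)) p.2

lemma endSpanFamily_mem (w : ι → S) (p : Σ i, Fin (finrank ℝ (ρ.endSpan (w i)))) :
    ρ.endSpanFamily w p ∈ ρ.endSpan (w p.1) :=
  Submodule.coe_mem _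

lemma orthonormal_endSpanFamily {w : ι → S}
    (horth : ∀ i j, i ≠ j → ∀ f f' : IntertwiningMap ρ ρ, ⟪f (w i), f' (w j)⟫_ℝ = 0) :
    Orthonormal ℝ (ρ.endSpanFamily w) := by
  classical
  rw [orthonormal_iff_ite]
  rintro ⟨i, a⟩ ⟨j, b⟩
  by_cases hij : i = j
  · subst hij
    simp only [endSpanFamily, ← Submodule.coe_inner,
      orthonormal_iff_ite.mp (stdOrthonormalBasis ℝ _).orthonormal, Sigma.mk.inj_iff, heq_eq_eq,
      true_and]
  · obtain ⟨f, hf⟩ := mem_endSpan.mp (endSpanFamily_mem w ⟨i, a⟩)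
    obtain ⟨f', hf'⟩ := mem_endSpan.mp (endSpanFamily_mem w ⟨j, b⟩)
    rw [← hf, ← hf', horth i j hij, if_neg fun h => hij (Sigma.mk.inj_iff.mp h).1]

lemma span_endSpanFamily (w : ι → S) :
    span ℝ (Set.range (ρ.endSpanFamily w)) = ⨆ i, ρ.endSpan (w i) := by
  refine le_antisymm (span_le.mpr ?_) (iSup_le fun i x hx => ?_)
  · rintro _ ⟨p, rfl⟩
    exact mem_iSup_of_mem p.1 (endSpanFamily_mem w p)
  · let b := stdOrthonormalBasis ℝ (ρ.endSpan (w i))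
    have hx' : x = ∑ a, ⟪(b a : S), x⟫_ℝ • (b a : S) := by
      simpa using (congrArg Subtype.val (b.sum_repr' ⟨x, hx⟩)).symm
    rw [hx']
    exact sum_mem fun a _ => smul_mem _ _ (subset_span ⟨⟨i, a⟩, rfl⟩)

lemma IsOrthogonal.inner_endSpanFamily_apply_self (hρ : ρ.IsOrthogonal) [ρ.IsIrreducible]
    {w : ι → S} (hnorm : ∀ i, ⟪w i, w i⟫_ℝ = 1) (p : Σ i, Fin (finrank ℝ (ρ.endSpan (w i))))
    (g : G) : ⟪ρ.endSpanFamily w p, ρ g (ρ.endSpanFamily w p)⟫_ℝ = ⟪w p.1, ρ g (w p.1)⟫_ℝ := by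
  obtain ⟨f, hf⟩ := mem_endSpan.mp (endSpanFamily_mem w p)
  have hw : w p.1 ≠ 0 := inner_self_ne_zero.mp (by rw [hnorm p.1]; exact one_ne_zero)
  refine hf ▸ hρ.inner_map_apply_self f hw ?_ g
  rw [hf, hnorm, real_inner_self_eq_norm_sq, endSpanFamily, Submodule.norm_coe,
    (stdOrthonormalBasis ℝ _).orthonormal.1, one_pow]

lemma IsOrthogonal.sum_inner_endSpanFamily_apply_self (hρ : ρ.IsOrthogonal) [ρ.IsIrreducible]
    [Fintype ι] {w : ι → S} (hnorm : ∀ i, ⟪w i, w i⟫_ℝ = 1) (g : G) :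
    ∑ p, ⟪ρ.endSpanFamily w p, ρ g (ρ.endSpanFamily w p)⟫_ℝ =
      finrank ℝ (IntertwiningMap ρ ρ) * ∑ i, ⟪w i, ρ g (w i)⟫_ℝ := by
  rw [Finset.sum_congr rfl fun p _ => hρ.inner_endSpanFamily_apply_self hnorm p g,
    Fintype.sum_sigma, Finset.mul_sum]
  refine Finset.sum_congr rfl fun i _ => ?_
  have hw : w i ≠ 0 := inner_self_ne_zero.mp (by rw [hnorm i]; exact one_ne_zero)
  simp only [Finset.sum_const, Finset.card_univ, Fintype.card_fin, nsmul_eq_mul,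
    finrank_endSpan hw]

end Representation

open Representation

/-- (Theorem `t:sumcosinechar`.) Let `S` be a simple real `G`-module
with `G`-invariant inner product, character `σ`, endomorphism ring `𝔻`, and let
`w₁,…,w_m` be a `𝔻`-basis of the Wythoff space `W = Fix_S(H)` with `⟨w_i,w_i⟩ = 1` and
`⟨w_i d₁, w_j d₂⟩ = 0` for `i ≠ j`, `d₁,d₂ ∈ 𝔻`. Then for all `g ∈ G`:
`σ(e_H·g) = ⟨σ,σ⟩ · Σ_i ⟨w_i·g, w_i⟩`. -/
theorem stmt13 {G : Type} [Group G] [Finite G] (H : Subgroup G)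
    {S : Type} [NormedAddCommGroup S] [InnerProductSpace ℝ S] [FiniteDimensional ℝ S]
    (ρ : Representation ℝ G S)
    (horth : ∀ g (u v : S), ⟪ρ g u, ρ g v⟫_ℝ = ⟪u, v⟫_ℝ)
    (hnt : Nontrivial S)
    (hsimple : ∀ W : Submodule ℝ S, (∀ g, ∀ x ∈ W, ρ g x ∈ W) → W = ⊥ ∨ W = ⊤)
    (m : ℕ) (w : Fin m → S)
    (hfix : ∀ i, ∀ h ∈ H, ρ h (w i) = w i)
    (hnorm : ∀ i, ⟪w i, w i⟫_ℝ = 1)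
    (horthD : ∀ i j, i ≠ j → ∀ d₁ d₂ : S →ₗ[ℝ] S,
      (∀ g, d₁ ∘ₗ ρ g = ρ g ∘ₗ d₁) → (∀ g, d₂ ∘ₗ ρ g = ρ g ∘ₗ d₂) →
      ⟪d₁ (w i), d₂ (w j)⟫_ℝ = 0)
    -- the `w_i` span the Wythoff space over `𝔻 = End_{ℝG}(S)`:
    (hspan : ∀ v : S, (∀ h ∈ H, ρ h v = v) →
      ∃ c : Fin m → (S →ₗ[ℝ] S),
        (∀ i g, c i ∘ₗ ρ g = ρ g ∘ₗ c i) ∧ v = ∑ i, c i (w i)) :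
    ∀ g : G,
      -- `σ(e_H·g) = (1/|H|)·Σ_{h∈H} σ(hg)`:
      (Nat.card H : ℝ)⁻¹ * ∑ᶠ h : H, LinearMap.trace ℝ S (ρ ((h : G) * g))
      -- `= ⟨σ,σ⟩ · Σ_i ⟨w_i·g, w_i⟩`:
      = ((Nat.card G : ℝ)⁻¹ * ∑ᶠ x : G,
            LinearMap.trace ℝ S (ρ x) * LinearMap.trace ℝ S (ρ x))
        * ∑ i, ⟪ρ g (w i), w i⟫_ℝ := by
  intro g
  have := Fintype.ofFinite G
  have := Fintype.ofFinite H
  have hρ : ρ.IsOrthogonal := horth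
  have := isIrreducible_of_forall_submodule hsimple
  have : Invertible (Fintype.card H : ℝ) := invertibleOfNonzero (by simp)
  have hρH : IsOrthogonal (ρ.comp H.subtype) := fun h => horth h
  have hW : span ℝ (Set.range (ρ.endSpanFamily w)) = invariants (ρ.comp H.subtype) := by
    rw [span_endSpanFamily]
    refine iSup_endSpan_eq_invariants (fun i h => hfix i h h.2) fun v hv => ?_
    obtain ⟨c, hc, rfl⟩ := hspan v fun h hh => hv ⟨h, hh⟩
    exact ⟨fun i => ⟨c i, hc i⟩, rfl⟩
  have hON := orthonormal_endSpanFamily (ρ := ρ) fun i j hij f f' =>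
    horthD i j hij f f' f.isIntertwining' f'.isIntertwining'
  calc (Nat.card H : ℝ)⁻¹ * ∑ᶠ h : H, LinearMap.trace ℝ S (ρ ((h : G) * g))
      = LinearMap.trace ℝ S (averageMap (ρ.comp H.subtype) ∘ₗ ρ g) := by
        rw [trace_averageMap_comp, finsum_eq_sum_of_fintype, Nat.card_eq_fintype_card,
          invOf_eq_inv]
        simp only [map_mul, Module.End.mul_eq_comp]
        rfl
    _ = ∑ p, ⟪ρ.endSpanFamily w p, ρ g (ρ.endSpanFamily w p)⟫_ℝ := by
        rw [hρH.averageMap_eq_starProjection, ← hW, hON.trace_comp_starProjection_span]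
    _ = finrank ℝ (IntertwiningMap ρ ρ) * ∑ i, ⟪w i, ρ g (w i)⟫_ℝ :=
        hρ.sum_inner_endSpanFamily_apply_self hnorm g
    _ = _ := by
        simp only [← hρ.card_inv_mul_sum_char_mul_self_eq_finrank, finsum_eq_sum_of_fintype,
          real_inner_comm (ρ g _)]
        rfl
end

section
/- Let G be a finite group, H ≤ G, and let S be a simple real G-module with G-invariant inner product, character σ, such that the fixed space W = Fix_S(H) is one-dimensional over 𝔻 = End_{ℝG}(S). Then for any w ∈ W with ⟨w,w⟩ = 1 and any g ∈ G: ⟨w·g, w⟩ = σ(e_H·g)/⟨σ,σ⟩ = (1/(|H|·⟨σ,σ⟩))·Σ_{h∈H} σ(hg). -/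
open scoped InnerProductSpace

/-!
Averaging over `H` is the orthogonal projection `P` onto `W = Fix_S(H)`, so the numerator is
`tr(P ρ(g)) = Σᵢ ⟪vᵢ, ρ(g) vᵢ⟫` for an orthonormal basis `(vᵢ)` of `W`. Each `vᵢ` is `d w` for some
`d ∈ 𝔻`; by Schur's lemma the symmetric intertwiner `d* d` is a scalar, which `‖vᵢ‖ = ‖w‖ = 1`
forces to be `1`, so every term equals `⟪ρ(g) w, w⟫`. The denominator `⟨σ,σ⟩` is `dim 𝔻`, and
evaluation at `w` identifies `𝔻` with `W`. Both sides thus carry the same factor `dim W`.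
-/

theorem Submodule.trace_starProjection_comp {𝕜 E ι : Type*} [RCLike 𝕜] [NormedAddCommGroup E]
    [InnerProductSpace 𝕜 E] [FiniteDimensional 𝕜 E] [Fintype ι]
    (K : Submodule 𝕜 E) (b : OrthonormalBasis ι 𝕜 K) (A : E →ₗ[𝕜] E) :
    LinearMap.trace 𝕜 E (K.starProjection.toLinearMap ∘ₗ A) = ∑ i, ⟪(b i : E), A (b i)⟫_𝕜 := by
  rw [LinearMap.trace_comp_comm', OrthonormalBasis.starProjection_eq_sum_rankOne b]
  have hrankOne (x : E) :
      LinearMap.trace 𝕜 E (A ∘ₗ (InnerProductSpace.rankOne 𝕜 x x).toLinearMap) = ⟪x, A x⟫_𝕜 := by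
    rw [← LinearMap.coe_toContinuousLinearMap A, ← ContinuousLinearMap.toLinearMap_comp,
      InnerProductSpace.comp_rankOne, InnerProductSpace.trace_rankOne]
    rfl
  simp only [ContinuousLinearMap.toLinearMap_sum, ← Module.End.mul_eq_comp, Finset.mul_sum,
    map_sum]
  exact Finset.sum_congr rfl fun i _ => hrankOne _

namespace Representation

variable {G S : Type*} [Group G] [NormedAddCommGroup S] [InnerProductSpace ℝ S]
  {ρ : Representation ℝ G S}

theorem trace_averageMap_comp_s14 {k V : Type*} [Field k] [AddCommGroup V] [Module k V]
    (π : Representation k G V) [Fintype G] [Invertible (Fintype.card G : k)] (A : V →ₗ[k] V) :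
    LinearMap.trace k V (π.averageMap ∘ₗ A)
      = (Fintype.card G : k)⁻¹ * ∑ g, LinearMap.trace k V (π g ∘ₗ A) := by
  simp [averageMap, GroupAlgebra.average, ← Module.End.mul_eq_comp, Finset.sum_mul, map_sum]

theorem inner_inv_apply_left (horth : ∀ g (u v : S), ⟪ρ g u, ρ g v⟫_ℝ = ⟪u, v⟫_ℝ)
    (g : G) (u v : S) : ⟪ρ g⁻¹ u, v⟫_ℝ = ⟪u, ρ g v⟫_ℝ := by
  rw [← horth g, ← Module.End.mul_apply, ← map_mul, mul_inv_cancel, map_one, Module.End.one_apply]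

theorem adjoint_eq_inv [FiniteDimensional ℝ S]
    (horth : ∀ g (u v : S), ⟪ρ g u, ρ g v⟫_ℝ = ⟪u, v⟫_ℝ) (g : G) :
    LinearMap.adjoint (ρ g) = ρ g⁻¹ :=
  ((LinearMap.eq_adjoint_iff _ _).mpr (inner_inv_apply_left horth g)).symm

theorem character_inv [FiniteDimensional ℝ S]
    (horth : ∀ g (u v : S), ⟪ρ g u, ρ g v⟫_ℝ = ⟪u, v⟫_ℝ) (g : G) :
    ρ.character g⁻¹ = ρ.character g := by
  simp only [character, LinearMap.trace_eq_sum_inner _ (stdOrthonormalBasis ℝ S)]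
  refine Finset.sum_congr rfl fun i _ => ?_
  rw [← inner_inv_apply_left horth, inv_inv, real_inner_comm]

theorem averageMap_eq_starProjection [Fintype G] [Invertible (Fintype.card G : ℝ)]
    [FiniteDimensional ℝ S] (horth : ∀ g (u v : S), ⟪ρ g u, ρ g v⟫_ℝ = ⟪u, v⟫_ℝ) :
    ρ.averageMap = ρ.invariants.starProjection := by
  ext u
  refine (Submodule.eq_starProjection_of_mem_of_inner_eq_zero (ρ.averageMap_invariant u)
    fun z hz => ?_).symm
  have hterm (g : G) : ⟪ρ g u, z⟫_ℝ = ⟪u, z⟫_ℝ := by rw [← horth g u z, hz g]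
  have hmean : ⟪ρ.averageMap u, z⟫_ℝ = ⟪u, z⟫_ℝ := by
    simp [averageMap, GroupAlgebra.average, map_sum, sum_inner, real_inner_smul_left, hterm]
  rw [inner_sub_left, hmean, sub_self]

theorem exists_eq_smul_of_isSymmetric_of_commute [FiniteDimensional ℝ S] [Nontrivial S]
    (hsimple : ∀ W : Submodule ℝ S, (∀ g, ∀ x ∈ W, ρ g x ∈ W) → W = ⊥ ∨ W = ⊤)
    {T : S →ₗ[ℝ] S} (hT : T.IsSymmetric) (hcomm : ∀ g, T ∘ₗ ρ g = ρ g ∘ₗ T) :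
    ∃ c : ℝ, ∀ u, T u = c • u := by
  -- Over `ℝ`, symmetry is what provides an eigenvalue; its eigenspace is then `G`-stable.
  obtain ⟨μ, hμ⟩ : ∃ μ, Module.End.HasEigenvalue T μ :=
    ⟨_, hT.hasEigenvalue_iSup_of_finiteDimensional⟩
  have hinv (g) : ∀ x ∈ Module.End.eigenspace T μ, ρ g x ∈ Module.End.eigenspace T μ := by
    intro x hx
    rw [Module.End.mem_eigenspace_iff] at hx ⊢
    rw [← LinearMap.comp_apply, hcomm, LinearMap.comp_apply, hx, map_smul]
  obtain hbot | htop := hsimple _ hinv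
  · exact absurd hbot (Module.End.hasEigenvalue_iff.mp hμ)
  · exact ⟨μ, fun u => Module.End.mem_eigenspace_iff.mp (htop ▸ Submodule.mem_top)⟩

theorem exists_inner_apply_apply_eq_mul_inner [FiniteDimensional ℝ S] [Nontrivial S]
    (horth : ∀ g (u v : S), ⟪ρ g u, ρ g v⟫_ℝ = ⟪u, v⟫_ℝ)
    (hsimple : ∀ W : Submodule ℝ S, (∀ g, ∀ x ∈ W, ρ g x ∈ W) → W = ⊥ ∨ W = ⊤)
    (d : IntertwiningMap ρ ρ) :
    ∃ c : ℝ, ∀ u v, ⟪d u, d v⟫_ℝ = c * ⟪u, v⟫_ℝ := by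
  set D := LinearMap.adjoint d.toLinearMap
  have hD (g : G) : D ∘ₗ ρ g = ρ g ∘ₗ D := by
    have := congrArg LinearMap.adjoint (d.isIntertwining' g⁻¹)
    rw [LinearMap.adjoint_comp, LinearMap.adjoint_comp, adjoint_eq_inv horth, inv_inv] at this
    exact this.symm
  have hsymm : (D ∘ₗ d.toLinearMap).IsSymmetric := fun a b => by
    simp only [D, LinearMap.comp_apply, LinearMap.adjoint_inner_left,
      LinearMap.adjoint_inner_right]
  have hcomm (g : G) : (D ∘ₗ d.toLinearMap) ∘ₗ ρ g = ρ g ∘ₗ (D ∘ₗ d.toLinearMap) := by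
    rw [LinearMap.comp_assoc, d.isIntertwining', ← LinearMap.comp_assoc, hD, LinearMap.comp_assoc]
  obtain ⟨c, hc⟩ := exists_eq_smul_of_isSymmetric_of_commute hsimple hsymm hcomm
  refine ⟨c, fun u v => ?_⟩
  rw [← real_inner_smul_right, ← hc, LinearMap.comp_apply, LinearMap.adjoint_inner_right]
  rfl

theorem inner_apply_intertwiningMap_mul_inner_self [FiniteDimensional ℝ S] [Nontrivial S]
    (horth : ∀ g (u v : S), ⟪ρ g u, ρ g v⟫_ℝ = ⟪u, v⟫_ℝ)
    (hsimple : ∀ W : Submodule ℝ S, (∀ g, ∀ x ∈ W, ρ g x ∈ W) → W = ⊥ ∨ W = ⊤)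
    (d : IntertwiningMap ρ ρ) (g : G) (w : S) :
    ⟪ρ g (d w), d w⟫_ℝ * ⟪w, w⟫_ℝ = ⟪d w, d w⟫_ℝ * ⟪ρ g w, w⟫_ℝ := by
  obtain ⟨c, hc⟩ := exists_inner_apply_apply_eq_mul_inner horth hsimple d
  rw [← d.isIntertwining, hc, hc]
  ring

theorem injective_applyₗ_comp_toLinearMapl
    (hsimple : ∀ W : Submodule ℝ S, (∀ g, ∀ x ∈ W, ρ g x ∈ W) → W = ⊥ ∨ W = ⊤)
    {w : S} (hw : w ≠ 0) :
    Function.Injective ((LinearMap.applyₗ w).comp (IntertwiningMap.toLinearMapl ρ ρ)) := by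
  rw [← LinearMap.ker_eq_bot, LinearMap.ker_eq_bot']
  intro d hdw
  have hker (g) : ∀ x ∈ LinearMap.ker d.toLinearMap, ρ g x ∈ LinearMap.ker d.toLinearMap := by
    intro x hx
    rw [LinearMap.mem_ker] at hx ⊢
    rw [IntertwiningMap.toLinearMap_apply, d.isIntertwining, ← IntertwiningMap.toLinearMap_apply,
      hx, map_zero]
  obtain hbot | htop := hsimple _ hker
  · exact absurd (hbot ▸ LinearMap.mem_ker.mpr hdw : w ∈ (⊥ : Submodule ℝ S)) (by simpa using hw)
  · exact IntertwiningMap.ext (LinearMap.ker_eq_top.mp htop)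

theorem finrank_intertwiningMap_eq_finrank_invariants
    (hsimple : ∀ W : Submodule ℝ S, (∀ g, ∀ x ∈ W, ρ g x ∈ W) → W = ⊥ ∨ W = ⊤)
    (H : Subgroup G) {w : S} (hw : w ≠ 0) (hwfix : w ∈ invariants (ρ.comp H.subtype))
    (hspan : ∀ v ∈ invariants (ρ.comp H.subtype), ∃ d : IntertwiningMap ρ ρ, d w = v) :
    Module.finrank ℝ (IntertwiningMap ρ ρ)
      = Module.finrank ℝ (invariants (ρ.comp H.subtype)) := by
  have hrange : LinearMap.range ((LinearMap.applyₗ w).comp (IntertwiningMap.toLinearMapl ρ ρ))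
      = invariants (ρ.comp H.subtype) := by
    refine le_antisymm ?_ fun v hv => ?_
    · rintro _ ⟨d, rfl⟩ h
      exact (IntertwiningMap.isIntertwining _ _ d _ w).symm.trans (congrArg d (hwfix h))
    · obtain ⟨d, rfl⟩ := hspan v hv
      exact ⟨d, rfl⟩
  rw [← hrange, LinearMap.finrank_range_of_inj (injective_applyₗ_comp_toLinearMapl hsimple hw)]

theorem card_inv_mul_sum_trace_mul_eq_sum_inner [FiniteDimensional ℝ S]
    (horth : ∀ g (u v : S), ⟪ρ g u, ρ g v⟫_ℝ = ⟪u, v⟫_ℝ) (H : Subgroup G) [Fintype H]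
    [Invertible (Fintype.card H : ℝ)] {ι : Type*} [Fintype ι]
    (b : OrthonormalBasis ι ℝ (invariants (ρ.comp H.subtype))) (g : G) :
    (Fintype.card H : ℝ)⁻¹ * ∑ h : H, LinearMap.trace ℝ S (ρ (h * g))
      = ∑ i, ⟪(b i : S), ρ g (b i)⟫_ℝ := by
  rw [← Submodule.trace_starProjection_comp,
    ← averageMap_eq_starProjection (ρ := ρ.comp H.subtype) fun h => horth h,
    trace_averageMap_comp_s14]
  simp [map_mul, Module.End.mul_eq_comp]

theorem card_inv_mul_sum_trace_mul_trace_eq_finrank [Fintype G] [Invertible (Nat.card G : ℝ)]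
    [FiniteDimensional ℝ S] (horth : ∀ g (u v : S), ⟪ρ g u, ρ g v⟫_ℝ = ⟪u, v⟫_ℝ) :
    (Nat.card G : ℝ)⁻¹ * ∑ x, LinearMap.trace ℝ S (ρ x) * LinearMap.trace ℝ S (ρ x)
      = Module.finrank ℝ (IntertwiningMap ρ ρ) := by
  have := card_inv_mul_sum_char_mul_char_eq_finrank ρ ρ
  simp only [character_inv horth] at this
  exact this

end Representation

open Representation in
/-- (Corollary `c:cosine_spherical`.) If the Wythoff space
`W = Fix_S(H)` of a simple real `G`-module `S` is one-dimensional over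
`𝔻 = End_{ℝG}(S)`, then for any `w ∈ W` with `⟨w,w⟩ = 1` and any `g ∈ G`:
`⟨w·g, w⟩ = σ(e_H·g)/⟨σ,σ⟩ = (1/(|H|·⟨σ,σ⟩))·Σ_{h∈H} σ(hg)`. -/
theorem stmt14 {G : Type} [Group G] [Finite G] (H : Subgroup G)
    {S : Type} [NormedAddCommGroup S] [InnerProductSpace ℝ S] [FiniteDimensional ℝ S]
    (ρ : Representation ℝ G S)
    (horth : ∀ g (u v : S), ⟪ρ g u, ρ g v⟫_ℝ = ⟪u, v⟫_ℝ)
    (hnt : Nontrivial S)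
    (hsimple : ∀ W : Submodule ℝ S, (∀ g, ∀ x ∈ W, ρ g x ∈ W) → W = ⊥ ∨ W = ⊤)
    (w : S) (hwfix : ∀ h ∈ H, ρ h w = w) (hnorm : ⟪w, w⟫_ℝ = 1)
    -- `W = Fix_S(H)` is one-dimensional over `𝔻`, spanned by `w`:
    (hspan : ∀ v : S, (∀ h ∈ H, ρ h v = v) →
      ∃ d : S →ₗ[ℝ] S, (∀ g, d ∘ₗ ρ g = ρ g ∘ₗ d) ∧ v = d w) :
    ∀ g : G,
      ⟪ρ g w, w⟫_ℝ
        = ((Nat.card H : ℝ)⁻¹ * ∑ᶠ h : H, LinearMap.trace ℝ S (ρ ((h : G) * g)))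
          / ((Nat.card G : ℝ)⁻¹ * ∑ᶠ x : G,
              LinearMap.trace ℝ S (ρ x) * LinearMap.trace ℝ S (ρ x)) := by
  intro g
  have := Fintype.ofFinite G
  have := Fintype.ofFinite H
  have : Invertible (Fintype.card H : ℝ) :=
    invertibleOfNonzero (Nat.cast_ne_zero.mpr Fintype.card_ne_zero)
  have : Invertible (Nat.card G : ℝ) := invertibleOfNonzero (Nat.cast_ne_zero.mpr Nat.card_pos.ne')
  set W := invariants (ρ.comp H.subtype)
  have hw0 : w ≠ 0 := by rintro rfl; simp at hnorm
  have hwW : w ∈ W := fun h => hwfix h h.2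
  have hspanW (v) (hv : v ∈ W) : ∃ d : IntertwiningMap ρ ρ, d w = v := by
    obtain ⟨d, hd, rfl⟩ := hspan v fun h hh => hv ⟨h, hh⟩
    exact ⟨⟨d, hd⟩, rfl⟩
  have hdim : 0 < Module.finrank ℝ W :=
    Module.finrank_pos_iff_exists_ne_zero.mpr ⟨⟨w, hwW⟩, by simpa using hw0⟩
  let b := stdOrthonormalBasis ℝ W
  have hbasis (i) : ⟪(b i : S), ρ g (b i)⟫_ℝ = ⟪ρ g w, w⟫_ℝ := by
    obtain ⟨d, hd⟩ := hspanW _ (b i).2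
    have hb : ‖(b i : S)‖ = 1 := b.orthonormal.1 i
    have := inner_apply_intertwiningMap_mul_inner_self horth hsimple d g w
    rw [hd, hnorm, real_inner_self_eq_norm_sq, hb] at this
    simpa [real_inner_comm] using this
  rw [finsum_eq_sum_of_fintype, finsum_eq_sum_of_fintype, Nat.card_eq_fintype_card,
    card_inv_mul_sum_trace_mul_eq_sum_inner horth H b, Finset.sum_congr rfl fun i _ => hbasis i,
    card_inv_mul_sum_trace_mul_trace_eq_finrank horth,
    finrank_intertwiningMap_eq_finrank_invariants hsimple H hw0 hwW hspanW]
  simp only [Finset.sum_const, Finset.card_univ, Fintype.card_fin, nsmul_eq_mul]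
  exact (mul_div_cancel_left₀ _ (Nat.cast_ne_zero.mpr hdim.ne')).symm
end

section
/- Let G be a finite group and H ≤ G. For each double coset K = HgH define e_K = (1/|H|)·Σ_{x∈K} x ∈ ℚG. Then the product of any two such elements e_K·e_L is a ℤ-linear combination of the elements e_M (M ranging over double cosets); hence the ℤ-span of {e_K : K ∈ H\G/H} is a subring of ℚG finitely generated as a ℤ-module, and every e_K is integral over ℤ. -/
/-- The double coset sum `e_K = (1/|H|)·Σ_{x∈HgH} x ∈ ℚG`. -/
noncomputable def eDoset {G : Type} [Group G] [Finite G] (H : Subgroup G) (g : G) :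
    MonoidAlgebra ℚ G :=
  (Nat.card H : ℚ)⁻¹ •
    ∑ᶠ x ∈ DoubleCoset.doubleCoset g (H : Set G) (H : Set G), MonoidAlgebra.single x (1 : ℚ)

/-!
The coefficient of `z` in `e_K * e_L` is `N(z) / |H|²`, where `N(z)` counts the `x ∈ K` with
`x⁻¹ z ∈ L`. The count `N` is constant on double cosets, and it is divisible by `|H|` because the
set it counts is stable under right multiplication by `H`, hence a union of left cosets of `H`.
So `e_K * e_L = Σ_M (N(g_M) / |H|) e_M` with integer coefficients. The `ℤ`-span of the `e_K` is
therefore a finitely generated `ℤ`-module closed under multiplication; adjoining `1` to it gives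
a subring that is finite over `ℤ`, whence integrality.
-/

open DoubleCoset MonoidAlgebra
open scoped Pointwise

theorem Subgroup.card_dvd_card_of_mul_mem {G : Type*} [Group G] {H : Subgroup G} {S : Set G}
    (hS : ∀ x ∈ S, ∀ h ∈ H, x * h ∈ S) : Nat.card H ∣ Nat.card S := by
  have hSH : S * (H : Set G) = S := by
    refine subset_antisymm ?_ fun x hx => ⟨x, hx, 1, H.one_mem, mul_one x⟩
    rintro _ ⟨x, hx, h, hh, rfl⟩
    exact hS x hx h hh
  rw [← hSH, Subgroup.card_mul_eq_card_subgroup_mul_card_quotient]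
  exact dvd_mul_right _ _

theorem IsIntegral.of_mem_of_fg_of_mul_le {R A : Type*} [CommRing R] [Ring A] [Algebra R A]
    {N : Submodule R A} (hN : N.FG) (hNN : N * N ≤ N) {x : A} (hx : x ∈ N) : IsIntegral R x := by
  have hMM : (1 ⊔ N) * (1 ⊔ N) ≤ 1 ⊔ N := by
    simp only [Submodule.mul_sup, Submodule.sup_mul, one_mul, mul_one]
    exact sup_le le_rfl (sup_le le_sup_right (hNN.trans le_sup_right))
  let S := (1 ⊔ N).toSubalgebra (Submodule.one_le.mp le_sup_left)
    fun _ _ ha hb => hMM (Submodule.mul_mem_mul ha hb)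
  have hS : S.toSubmodule.FG := by
    rw [Submodule.toSubalgebra_toSubmodule, Submodule.one_eq_span]
    exact (Submodule.fg_span_singleton 1).sup hN
  exact .of_mem_of_fg S hS x (Submodule.mem_sup_right hx)

namespace DoubleCoset

variable {G : Type*} [Group G] {H K : Subgroup G} {g x a b : G}

lemma mul_mem_doubleCoset_of_mem_left (ha : a ∈ H) (hx : x ∈ doubleCoset g H K) :
    a * x ∈ doubleCoset g H K := by
  obtain ⟨h, hh, k, hk, rfl⟩ := mem_doubleCoset.1 hx
  exact mem_doubleCoset.2 ⟨a * h, H.mul_mem ha hh, k, hk, by group⟩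

lemma mul_mem_doubleCoset_of_mem_right (hb : b ∈ K) (hx : x ∈ doubleCoset g H K) :
    x * b ∈ doubleCoset g H K := by
  obtain ⟨h, hh, k, hk, rfl⟩ := mem_doubleCoset.1 hx
  exact mem_doubleCoset.2 ⟨h, hh, k * b, K.mul_mem hk hb, by group⟩

/-- The number of factorizations `z = x * y` with `x ∈ H g₁ H` and `y ∈ H g₂ H`. -/
noncomputable def mulCount (H : Subgroup G) (g₁ g₂ z : G) : ℕ :=
  Nat.card {x | x ∈ doubleCoset g₁ (H : Set G) H ∧ x⁻¹ * z ∈ doubleCoset g₂ (H : Set G) H}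

lemma mulCount_mul_mul (g₁ g₂ z : G) (ha : a ∈ H) (hb : b ∈ H) :
    mulCount H g₁ g₂ (a * z * b) = mulCount H g₁ g₂ z := by
  refine Nat.card_congr ⟨fun x => ⟨a⁻¹ * x, ?_, ?_⟩, fun x => ⟨a * x, ?_, ?_⟩, ?_, ?_⟩
  · exact mul_mem_doubleCoset_of_mem_left (H.inv_mem ha) x.2.1
  · simpa [mul_assoc] using mul_mem_doubleCoset_of_mem_right (H.inv_mem hb) x.2.2
  · exact mul_mem_doubleCoset_of_mem_left ha x.2.1
  · simpa [mul_assoc] using mul_mem_doubleCoset_of_mem_right hb x.2.2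
  · intro x; ext; simp
  · intro x; ext; simp

lemma card_dvd_mulCount (g₁ g₂ z : G) : Nat.card H ∣ mulCount H g₁ g₂ z := by
  refine Subgroup.card_dvd_card_of_mul_mem fun x hx h hh => ⟨?_, ?_⟩
  · exact mul_mem_doubleCoset_of_mem_right hh hx.1
  · simpa [mul_assoc] using mul_mem_doubleCoset_of_mem_left (H.inv_mem hh) hx.2

variable (H) in
noncomputable def reps [Finite G] : Finset G :=
  (Set.finite_range fun g => (mk H H g).out).toFinset

lemma eq_of_mem_reps [Finite G] {x y : G} (hx : x ∈ reps H) (hy : y ∈ reps H)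
    (hxy : doubleCoset x (H : Set G) H = doubleCoset y (H : Set G) H) : x = y := by
  simp only [reps, Set.Finite.mem_toFinset, Set.mem_range] at hx hy
  obtain ⟨g, rfl⟩ := hx
  obtain ⟨g', rfl⟩ := hy
  have := mk_eq_of_doubleCoset_eq hxy
  rw [out_eq', out_eq'] at this
  rw [this]

lemma exists_mem_reps_mem_doubleCoset [Finite G] (z : G) :
    ∃ x ∈ reps H, z ∈ doubleCoset x (H : Set G) H := by
  refine ⟨(mk H H z).out, by simp [reps], ?_⟩
  exact (mem_quotToDoubleCoset_iff (mk H H z) z).2 rfl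

end DoubleCoset

lemma coeff_finsum_mem_single_one {R M : Type*} [Semiring R] [Finite M] (S : Set M) (z : M) :
    (∑ᶠ x ∈ S, single x (1 : R)).coeff z = S.indicator 1 z := by
  classical
  have := Fintype.ofFinite M
  rw [← S.coe_toFinset, finsum_mem_coe_finset, coeff_sum, Finsupp.finsetSum_apply]
  simp [Finsupp.single_apply, Set.indicator_apply]

section

variable {G : Type} [Group G] [Finite G] (H : Subgroup G)

lemma coeff_eDoset (g z : G) :
    (eDoset H g).coeff z =
      (doubleCoset g (H : Set G) H).indicator (fun _ => (Nat.card H : ℚ)⁻¹) z := by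
  classical
  rw [eDoset, coeff_smul_apply, coeff_finsum_mem_single_one, smul_eq_mul]
  simp [Set.indicator_apply]

lemma coeff_eDoset_mul (g₁ g₂ z : G) :
    (eDoset H g₁ * eDoset H g₂).coeff z = mulCount H g₁ g₂ z / (Nat.card H : ℚ) ^ 2 := by
  classical
  have := Fintype.ofFinite G
  have hterm (x : G) : (eDoset H g₁).coeff x * (eDoset H g₂).coeff (x⁻¹ * z) =
      if x ∈ doubleCoset g₁ (H : Set G) H ∧ x⁻¹ * z ∈ doubleCoset g₂ (H : Set G) H
      then ((Nat.card H : ℚ) ^ 2)⁻¹ else 0 := by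
    simp only [coeff_eDoset, Set.indicator_apply]
    split_ifs <;> simp_all [sq]
  rw [coeff_mul_apply_left, Finsupp.sum_fintype _ _ (by simp),
    Finset.sum_congr rfl fun x _ => hterm x, Finset.sum_ite, Finset.sum_const_zero, add_zero,
    Finset.sum_const, nsmul_eq_mul, mulCount,
    Nat.card_eq_card_toFinset, Set.toFinset_ofPred, div_eq_mul_inv]

lemma coeff_sum_reps_smul_eDoset (c : G → ℤ) {x₀ z : G} (hx₀ : x₀ ∈ reps H)
    (hz : z ∈ doubleCoset x₀ (H : Set G) H) :
    (∑ x ∈ reps H, c x • eDoset H x).coeff z = c x₀ / (Nat.card H : ℚ) := by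
  classical
  rw [coeff_sum, Finsupp.finsetSum_apply, Finset.sum_eq_single_of_mem x₀ hx₀]
  · rw [coeff_smul_apply, coeff_eDoset, Set.indicator_of_mem hz, zsmul_eq_mul, div_eq_mul_inv]
  · intro x hx hne
    have hzx : z ∉ doubleCoset x (H : Set G) H := fun hzx => hne <| eq_of_mem_reps hx hx₀ <| by
      rw [← doubleCoset_eq_of_mem hzx, doubleCoset_eq_of_mem hz]
    rw [coeff_smul_apply, coeff_eDoset, Set.indicator_of_notMem hzx, smul_zero]

lemma eDoset_mul_eq_sum_reps (g₁ g₂ : G) :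
    eDoset H g₁ * eDoset H g₂ =
      ∑ x ∈ reps H, ((mulCount H g₁ g₂ x / Nat.card H : ℕ) : ℤ) • eDoset H x := by
  ext z
  obtain ⟨x₀, hx₀, hz⟩ := exists_mem_reps_mem_doubleCoset (H := H) z
  obtain ⟨a, ha, b, hb, rfl⟩ := mem_doubleCoset.1 hz
  have hH : (Nat.card H : ℚ) ≠ 0 := Nat.cast_ne_zero.2 Nat.card_pos.ne'
  rw [coeff_eDoset_mul, coeff_sum_reps_smul_eDoset H _ hx₀ hz, mulCount_mul_mul _ _ _ ha hb,
    Int.cast_natCast, Nat.cast_div (card_dvd_mulCount _ _ _) hH]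
  field_simp

end

/-- The product of two double coset sums `e_K·e_L` is a ℤ-linear
combination of double coset sums; hence the ℤ-span of the `e_K` is a subring of `ℚG`,
finitely generated as a ℤ-module, and every `e_K` is integral over ℤ. -/
theorem stmt15 {G : Type} [Group G] [Finite G] (H : Subgroup G) :
    (∀ g₁ g₂ : G, ∃ (T : Finset G) (c : G → ℤ),
      (∀ x ∈ T, ∀ y ∈ T,
        DoubleCoset.doubleCoset x (H : Set G) (H : Set G) = DoubleCoset.doubleCoset y (H : Set G) (H : Set G)
          → x = y) ∧
      eDoset H g₁ * eDoset H g₂ = ∑ x ∈ T, c x • eDoset H x) ∧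
    (∀ x ∈ Submodule.span ℤ (Set.range (eDoset H)),
      ∀ y ∈ Submodule.span ℤ (Set.range (eDoset H)),
        x * y ∈ Submodule.span ℤ (Set.range (eDoset H))) ∧
    (Submodule.span ℤ (Set.range (eDoset H))).FG ∧
    (∀ g : G, IsIntegral ℤ (eDoset H g)) := by
  set N := Submodule.span ℤ (Set.range (eDoset H))
  have hNN : N * N ≤ N := by
    rw [Submodule.span_mul_span, Submodule.span_le]
    rintro _ ⟨_, ⟨g₁, rfl⟩, _, ⟨g₂, rfl⟩, rfl⟩
    change eDoset H g₁ * eDoset H g₂ ∈ N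
    rw [eDoset_mul_eq_sum_reps]
    exact Submodule.sum_mem _ fun x _ => Submodule.smul_mem _ _ (Submodule.subset_span ⟨x, rfl⟩)
  have hN : N.FG := Submodule.fg_span (Set.finite_range _)
  refine ⟨fun g₁ g₂ => ⟨reps H, _, fun _ hx _ hy => eq_of_mem_reps hx hy,
      eDoset_mul_eq_sum_reps H g₁ g₂⟩,
    fun x hx y hy => hNN (Submodule.mul_mem_mul hx hy), hN,
    fun g => .of_mem_of_fg_of_mul_le hN hNN (Submodule.subset_span ⟨g, rfl⟩)⟩
end
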